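/- Fix δ ∈ (0,1), A > 0 and D > 0, and for B ∈ (0, A²/(4D)] define g(B) = sup_{z>0} (A·z − B·z^{1+δ} − D·z^{1−δ}). Then g is continuous and strictly decreasing on (0, A²/(4D)], g(B) → +∞ as B → 0⁺, and g(A²/(4D)) = 0. Consequently, for every p > 0 there exists a unique B(p) ∈ (0, A²/(4D)) with g(B(p)) = p, and B(p) → A²/(4D) as p → 0⁺. -/

import Mathlib

open Real Filter Set Topology

noncomputable section

/-- The auxiliary function `H_B(z) = A z - B z^{1+δ} - D z^{1-δ}`. -/
def Hfun (A B D δ z : ℝ) : ℝ := A * z - B * z ^ (1 + δ) - D * z ^ (1 - δ)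

/-- `g(B) = sup_{z > 0} (A z - B z^{1+δ} - D z^{1-δ})`. -/
def gB (A D δ B : ℝ) : ℝ := sSup (Hfun A B D δ '' Ioi 0)

/-!
Put `t = z ^ δ`. Then `H_B(z) = z (A - B t - D / t)`, and by AM-GM `B t + D / t ≥ 2 √(BD)`, with
equality at `t = √(D / B)`. So for `B ≤ A² / (4D)`, i.e. `2 √(BD) ≤ A`, the value of `H_B` at
`z₀ = √(D / B) ^ (1 / δ)` is `(A - 2 √(BD)) z₀ ≥ 0`, while `H_B < 0` unless `D / A ≤ t ≤ A / B`;
hence the supremum is a maximum, attained on a compact interval. Comparing `H_{B₁}` and `H_{B₂}`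
at a maximizer gives strict decrease and
`0 ≤ g(B₁) - g(B₂) ≤ (B₂ - B₁) ((A / B₁) ^ (1 / δ)) ^ (1 + δ)` for `B₁ ≤ B₂`, i.e. local Lipschitz
continuity. The lower bound `g(B) ≥ (A - 2 √(BD)) z₀` blows up as `B → 0⁺` and, with the AM-GM
upper bound, gives `g(A² / (4D)) = 0`. The intermediate value theorem then inverts `g` on
`(0, A² / (4D))`, and monotonicity gives the limit of the inverse.
-/

theorem IsCompact.exists_isMaxOn_of_le_imp_mem {α β : Type*} [TopologicalSpace α]
    [LinearOrder β] [TopologicalSpace β] [ClosedIciTopology β] {f : α → β} {s K : Set α}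
    (hK : IsCompact K) (hf : ContinuousOn f K) {c : α} (hc : c ∈ K)
    (hle : ∀ x ∈ s, f c ≤ f x → x ∈ K) : ∃ z ∈ K, IsMaxOn f s z := by
  obtain ⟨z, hzK, hz⟩ := hK.exists_isMaxOn ⟨c, hc⟩ hf
  refine ⟨z, hzK, fun x hx => ?_⟩
  by_cases hcx : f c ≤ f x
  · exact hz (hle x hx hcx)
  · exact (lt_of_not_ge hcx).le.trans (hz hc)

theorem two_mul_sqrt_mul_le_add_div {B D t : ℝ} (hB : 0 ≤ B) (hD : 0 ≤ D) (ht : 0 < t) :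
    2 * √(B * D) ≤ B * t + D / t :=
  calc 2 * √(B * D) = 2 * √(B * t) * √(D / t) := by
        rw [mul_assoc, ← sqrt_mul (by positivity)]; field_simp
    _ ≤ √(B * t) ^ 2 + √(D / t) ^ 2 := two_mul_le_add_sq _ _
    _ = B * t + D / t := by rw [sq_sqrt (by positivity), sq_sqrt (by positivity)]

theorem two_mul_sqrt_mul_le_of_le {A B D : ℝ} (hA : 0 ≤ A) (hD : 0 < D)
    (h : B ≤ A ^ 2 / (4 * D)) : 2 * √(B * D) ≤ A := by
  have : B * D ≤ (A / 2) ^ 2 := by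
    calc B * D ≤ A ^ 2 / (4 * D) * D := by gcongr
      _ = (A / 2) ^ 2 := by field_simp; ring
  linarith [(sqrt_le_left (by positivity)).2 this]

theorem two_mul_sqrt_mul_eq {A D : ℝ} (hA : 0 ≤ A) (hD : 0 < D) :
    2 * √(A ^ 2 / (4 * D) * D) = A := by
  rw [show A ^ 2 / (4 * D) * D = (A / 2) ^ 2 by field_simp; ring, sqrt_sq (by positivity)]
  ring

theorem surjOn_Ioo_Ioi_of_continuousOn {g : ℝ → ℝ} {a b : ℝ} (hab : a < b)
    (hg : ContinuousOn g (Ioc a b)) (htop : Tendsto g (𝓝[>] a) atTop) (hb : g b ≤ 0) :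
    SurjOn g (Ioo a b) (Ioi 0) := by
  intro p hp
  obtain ⟨c, hpc, hc⟩ := ((htop.eventually_gt_atTop p).and (Ioo_mem_nhdsGT hab)).exists
  obtain ⟨x, hx, rfl⟩ := intermediate_value_Icc' hc.2.le
    (hg.mono fun y hy => ⟨hc.1.trans_le hy.1, hy.2⟩) ⟨hb.trans (le_of_lt hp), hpc.le⟩
  refine ⟨x, ⟨hc.1.trans_le hx.1, lt_of_le_of_ne hx.2 ?_⟩, rfl⟩
  rintro rfl
  exact absurd hb (not_le.2 hp)

theorem tendsto_invFunOn_nhdsGT_zero {g : ℝ → ℝ} {a b : ℝ} (hg : StrictAntiOn g (Ioo a b))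
    (hpos : MapsTo g (Ioo a b) (Ioi 0)) (hsurj : SurjOn g (Ioo a b) (Ioi 0)) :
    Tendsto (Function.invFunOn g (Ioo a b)) (𝓝[>] 0) (𝓝 b) := by
  obtain ⟨x₀, hx₀, -⟩ := hsurj (mem_Ioi.2 one_pos)
  refine tendsto_order.2 ⟨fun c hc => ?_, fun c hc => ?_⟩
  · obtain ⟨c', hcc', hc'b⟩ := exists_between (max_lt (hx₀.1.trans hx₀.2) hc)
    have hc' : c' ∈ Ioo a b := ⟨(le_max_left a c).trans_lt hcc', hc'b⟩
    filter_upwards [Ioo_mem_nhdsGT (hpos hc')] with p hp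
    obtain ⟨hx, hgx⟩ := Function.invFunOn_pos (hsurj hp.1)
    refine (le_max_right a c).trans_lt (hcc'.trans (lt_of_not_ge fun hle => ?_))
    exact absurd (hg.antitoneOn hx hc' hle) (by rw [hgx]; exact not_le.2 hp.2)
  · filter_upwards [self_mem_nhdsWithin] with p hp
    exact (Function.invFunOn_pos (hsurj hp)).1.2.trans hc

section
variable {A B D δ z : ℝ}

theorem Hfun_eq_mul (hz : 0 < z) : Hfun A B D δ z = z * (A - B * z ^ δ - D / z ^ δ) := by
  have hzδ : z ^ δ ≠ 0 := (rpow_pos_of_pos hz δ).ne'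
  rw [Hfun, rpow_add hz, rpow_sub hz, rpow_one]
  field_simp

theorem continuousOn_Hfun : ContinuousOn (Hfun A B D δ) (Ioi 0) := fun _ hz =>
  ContinuousAt.continuousWithinAt <| by unfold Hfun; fun_prop (disch := exact Or.inl hz.ne')

theorem Hfun_le_mul (hB : 0 ≤ B) (hD : 0 ≤ D) (hz : 0 < z) :
    Hfun A B D δ z ≤ (A - 2 * √(B * D)) * z := by
  have := two_mul_sqrt_mul_le_add_div hB hD (rpow_pos_of_pos hz δ)
  rw [Hfun_eq_mul hz]
  nlinarith

theorem Hfun_sqrt_div_rpow_inv (hB : 0 < B) (hD : 0 < D) (hδ : δ ≠ 0) :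
    Hfun A B D δ (√(D / B) ^ δ⁻¹) = (A - 2 * √(B * D)) * √(D / B) ^ δ⁻¹ := by
  set s := √(D / B) with hs_def
  have hs : 0 < s := sqrt_pos.2 (div_pos hD hB)
  have hBD : √(B * D) = B * s := by
    rw [← sqrt_sq (mul_pos hB hs).le, mul_pow, hs_def, sq_sqrt (div_pos hD hB).le]
    field_simp
  have hDs : D / s = B * s := by
    rw [div_eq_iff hs.ne', mul_assoc, ← sq, hs_def, sq_sqrt (div_pos hD hB).le]
    field_simp
  rw [Hfun_eq_mul (rpow_pos_of_pos hs _), rpow_inv_rpow hs.le hδ, hDs, hBD]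
  ring

theorem mem_Icc_of_Hfun_nonneg (hA : 0 < A) (hB : 0 < B) (hD : 0 < D) (hδ : 0 < δ)
    (hz : 0 < z) (h : 0 ≤ Hfun A B D δ z) : z ∈ Icc ((D / A) ^ δ⁻¹) ((A / B) ^ δ⁻¹) := by
  have ht : 0 < z ^ δ := rpow_pos_of_pos hz δ
  rw [Hfun_eq_mul hz] at h
  have hfac := nonneg_of_mul_nonneg_right h hz
  have h₁ : 0 < B * z ^ δ := mul_pos hB ht
  have h₂ : 0 < D / z ^ δ := div_pos hD ht
  constructor
  · rw [rpow_inv_le_iff_of_pos (div_pos hD hA).le hz.le hδ, div_le_iff₀ hA]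
    have : D / z ^ δ < A := by linarith
    rw [div_lt_iff₀ ht] at this
    linarith
  · rw [le_rpow_inv_iff_of_pos hz.le (div_pos hA hB).le hδ, le_div_iff₀ hB]
    linarith

theorem exists_isMaxOn_Hfun (hA : 0 < A) (hB : 0 < B) (hD : 0 < D) (hδ : 0 < δ)
    (hBA : 2 * √(B * D) ≤ A) :
    ∃ z, 0 < z ∧ z ≤ (A / B) ^ δ⁻¹ ∧ IsMaxOn (Hfun A B D δ) (Ioi 0) z := by
  have hz₀ : 0 ≤ Hfun A B D δ (√(D / B) ^ δ⁻¹) := by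
    rw [Hfun_sqrt_div_rpow_inv hB hD hδ.ne']
    exact mul_nonneg (by linarith) (by positivity)
  have hsub : Icc ((D / A) ^ δ⁻¹) ((A / B) ^ δ⁻¹) ⊆ Ioi 0 :=
    fun x hx => lt_of_lt_of_le (by positivity) hx.1
  obtain ⟨z, hz, hmax⟩ := isCompact_Icc.exists_isMaxOn_of_le_imp_mem
    (continuousOn_Hfun.mono hsub) (mem_Icc_of_Hfun_nonneg hA hB hD hδ (by positivity) hz₀)
    fun x hx hle => mem_Icc_of_Hfun_nonneg hA hB hD hδ hx (hz₀.trans hle)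
  exact ⟨z, hsub hz, hz.2, hmax⟩

theorem gB_eq_Hfun_of_isMaxOn (hz : 0 < z) (h : IsMaxOn (Hfun A B D δ) (Ioi 0) z) :
    gB A D δ B = Hfun A B D δ z :=
  IsGreatest.csSup_eq ⟨mem_image_of_mem _ hz, forall_mem_image.2 fun _ hw => h hw⟩

theorem Hfun_le_gB (hA : 0 < A) (hB : 0 < B) (hD : 0 < D) (hδ : 0 < δ)
    (hBA : 2 * √(B * D) ≤ A) (hz : 0 < z) : Hfun A B D δ z ≤ gB A D δ B := by
  obtain ⟨z', hz', -, hmax⟩ := exists_isMaxOn_Hfun hA hB hD hδ hBA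
  rw [gB_eq_Hfun_of_isMaxOn hz' hmax]
  exact hmax hz

theorem sub_two_mul_sqrt_mul_le_gB (hA : 0 < A) (hB : 0 < B) (hD : 0 < D) (hδ : 0 < δ)
    (hBA : 2 * √(B * D) ≤ A) : (A - 2 * √(B * D)) * √(D / B) ^ δ⁻¹ ≤ gB A D δ B :=
  Hfun_sqrt_div_rpow_inv hB hD hδ.ne' ▸ Hfun_le_gB hA hB hD hδ hBA (by positivity)

theorem Hfun_sub_Hfun (B₁ B₂ : ℝ) :
    Hfun A B₁ D δ z - Hfun A B₂ D δ z = (B₂ - B₁) * z ^ (1 + δ) := by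
  unfold Hfun; ring

theorem gB_lt_gB_of_lt {B₁ B₂ : ℝ} (hA : 0 < A) (hB₁ : 0 < B₁) (hD : 0 < D) (hδ : 0 < δ)
    (hB₂A : 2 * √(B₂ * D) ≤ A) (h : B₁ < B₂) : gB A D δ B₂ < gB A D δ B₁ := by
  have hB₂ := hB₁.trans h
  have hB₁A : 2 * √(B₁ * D) ≤ A := le_trans (by gcongr) hB₂A
  obtain ⟨z, hz, -, hmax⟩ := exists_isMaxOn_Hfun hA hB₂ hD hδ hB₂A
  have hgap := Hfun_sub_Hfun (A := A) (D := D) (δ := δ) (z := z) B₁ B₂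
  have : 0 < (B₂ - B₁) * z ^ (1 + δ) := mul_pos (by linarith) (rpow_pos_of_pos hz _)
  calc gB A D δ B₂ = Hfun A B₂ D δ z := gB_eq_Hfun_of_isMaxOn hz hmax
    _ < Hfun A B₁ D δ z := by linarith
    _ ≤ gB A D δ B₁ := Hfun_le_gB hA hB₁ hD hδ hB₁A hz

theorem gB_sub_gB_le {B₁ B₂ : ℝ} (hA : 0 < A) (hB₁ : 0 < B₁) (hD : 0 < D) (hδ : 0 < δ)
    (hB₂A : 2 * √(B₂ * D) ≤ A) (h : B₁ ≤ B₂) :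
    gB A D δ B₁ - gB A D δ B₂ ≤ (B₂ - B₁) * ((A / B₁) ^ δ⁻¹) ^ (1 + δ) := by
  have hB₁A : 2 * √(B₁ * D) ≤ A := le_trans (by gcongr) hB₂A
  obtain ⟨z, hz, hzle, hmax⟩ := exists_isMaxOn_Hfun hA hB₁ hD hδ hB₁A
  have hgap := Hfun_sub_Hfun (A := A) (D := D) (δ := δ) (z := z) B₁ B₂
  have hpow : z ^ (1 + δ) ≤ ((A / B₁) ^ δ⁻¹) ^ (1 + δ) := by gcongr
  have := Hfun_le_gB hA (hB₁.trans_le h) hD hδ hB₂A hz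
  rw [gB_eq_Hfun_of_isMaxOn hz hmax]
  nlinarith

theorem strictAntiOn_gB (hA : 0 < A) (hD : 0 < D) (hδ : 0 < δ) :
    StrictAntiOn (gB A D δ) (Ioc 0 (A ^ 2 / (4 * D))) :=
  fun _ hB₁ _ hB₂ h => gB_lt_gB_of_lt hA hB₁.1 hD hδ (two_mul_sqrt_mul_le_of_le hA.le hD hB₂.2) h

theorem lipschitzOnWith_gB (hA : 0 < A) (hD : 0 < D) (hδ : 0 < δ) {b : ℝ} (hb : 0 < b) :
    LipschitzOnWith (((A / b) ^ δ⁻¹) ^ (1 + δ)).toNNReal (gB A D δ)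
      (Icc b (A ^ 2 / (4 * D))) := by
  refine LipschitzOnWith.of_le_add_mul' _ fun x hx y hy => ?_
  have hx₀ : 0 < x := hb.trans_le hx.1
  have hy₀ : 0 < y := hb.trans_le hy.1
  have hL : 0 ≤ ((A / b) ^ δ⁻¹) ^ (1 + δ) := by positivity
  rcases le_total x y with hxy | hyx
  · have hle := gB_sub_gB_le hA hx₀ hD hδ (two_mul_sqrt_mul_le_of_le hA.le hD hy.2) hxy
    have hLx : ((A / x) ^ δ⁻¹) ^ (1 + δ) ≤ ((A / b) ^ δ⁻¹) ^ (1 + δ) := by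
      gcongr
      exact hx.1
    rw [dist_comm, dist_eq, abs_of_nonneg (sub_nonneg.2 hxy)]
    nlinarith
  · have := (strictAntiOn_gB hA hD hδ).antitoneOn ⟨hy₀, hy.2⟩ ⟨hx₀, hx.2⟩ hyx
    nlinarith [dist_nonneg (x := x) (y := y)]

theorem continuousOn_gB (hA : 0 < A) (hD : 0 < D) (hδ : 0 < δ) :
    ContinuousOn (gB A D δ) (Ioc 0 (A ^ 2 / (4 * D))) := by
  intro B hB
  have hB₂ : B / 2 < B := half_lt_self hB.1
  have hnhds : Icc (B / 2) (A ^ 2 / (4 * D)) ∈ 𝓝[Ioc 0 (A ^ 2 / (4 * D))] B :=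
    mem_nhdsWithin.2 ⟨Ioi (B / 2), isOpen_Ioi, hB₂, fun x hx => ⟨le_of_lt hx.1, hx.2.2⟩⟩
  exact ((lipschitzOnWith_gB hA hD hδ (half_pos hB.1)).continuousOn B ⟨hB₂.le, hB.2⟩)
    |>.mono_of_mem_nhdsWithin hnhds

theorem tendsto_gB_atTop (hA : 0 < A) (hD : 0 < D) (hδ : 0 < δ) :
    Tendsto (gB A D δ) (𝓝[>] 0) atTop := by
  have hK : (0 : ℝ) < A ^ 2 / (4 * D) := by positivity
  have hfactor : Tendsto (fun B => A - 2 * √(B * D)) (𝓝[>] 0) (𝓝 A) := by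
    have : Continuous fun B => A - 2 * √(B * D) := by fun_prop
    simpa using (this.tendsto 0).mono_left nhdsWithin_le_nhds
  have hpow : Tendsto (fun B => √(D / B) ^ δ⁻¹) (𝓝[>] 0) atTop :=
    (tendsto_rpow_atTop (inv_pos.2 hδ)).comp <| tendsto_sqrt_atTop.comp <|
      (tendsto_inv_nhdsGT_zero.const_mul_atTop hD).congr fun B => (div_eq_mul_inv D B).symm
  refine tendsto_atTop_mono' _ ?_ (hfactor.pos_mul_atTop hA hpow)
  filter_upwards [Ioc_mem_nhdsGT hK] with B hB
  exact sub_two_mul_sqrt_mul_le_gB hA hB.1 hD hδ (two_mul_sqrt_mul_le_of_le hA.le hD hB.2)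

theorem gB_eq_zero (hA : 0 < A) (hD : 0 < D) (hδ : 0 < δ) :
    gB A D δ (A ^ 2 / (4 * D)) = 0 := by
  have hK : 0 < A ^ 2 / (4 * D) := by positivity
  have hKA := two_mul_sqrt_mul_eq hA.le hD
  obtain ⟨z, hz, -, hmax⟩ := exists_isMaxOn_Hfun hA hK hD hδ hKA.le
  apply le_antisymm
  · rw [gB_eq_Hfun_of_isMaxOn hz hmax]
    simpa [hKA] using Hfun_le_mul (A := A) (δ := δ) hK.le hD.le hz
  · simpa [hKA] using sub_two_mul_sqrt_mul_le_gB hA hK hD hδ hKA.le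

end

/-- `g` is continuous and strictly decreasing on `(0, A²/(4D)]`,
blows up as `B → 0⁺`, vanishes at `A²/(4D)`; hence for every `p > 0` there is a
unique `B(p) ∈ (0, A²/(4D))` with `g(B(p)) = p`, and `B(p) → A²/(4D)` as
`p → 0⁺`. -/
theorem gB_properties (A D δ : ℝ) (hA : 0 < A) (hD : 0 < D)
    (hδ : δ ∈ Ioo (0:ℝ) 1) :
    ContinuousOn (gB A D δ) (Ioc 0 (A^2 / (4*D))) ∧
    StrictAntiOn (gB A D δ) (Ioc 0 (A^2 / (4*D))) ∧
    Tendsto (gB A D δ) (𝓝[>] 0) atTop ∧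
    gB A D δ (A^2 / (4*D)) = 0 ∧
    ∃ Bp : ℝ → ℝ,
      (∀ p : ℝ, 0 < p →
        Bp p ∈ Ioo (0:ℝ) (A^2 / (4*D)) ∧ gB A D δ (Bp p) = p ∧
        (∀ B' ∈ Ioo (0:ℝ) (A^2 / (4*D)), gB A D δ B' = p → B' = Bp p)) ∧
      Tendsto Bp (𝓝[>] 0) (𝓝 (A^2 / (4*D))) := by
  have hK : 0 < A ^ 2 / (4 * D) := by positivity
  have hcont := continuousOn_gB hA hD hδ.1
  have hanti := strictAntiOn_gB hA hD hδ.1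
  have htop := tendsto_gB_atTop hA hD hδ.1
  have hzero := gB_eq_zero hA hD hδ.1
  have hpos : MapsTo (gB A D δ) (Ioo 0 (A ^ 2 / (4 * D))) (Ioi 0) := fun B hB =>
    hzero ▸ hanti (Ioo_subset_Ioc_self hB) (right_mem_Ioc.2 hK) hB.2
  have hsurj := surjOn_Ioo_Ioi_of_continuousOn hK hcont htop hzero.le
  refine ⟨hcont, hanti, htop, hzero, Function.invFunOn (gB A D δ) (Ioo 0 (A ^ 2 / (4 * D))),
    fun p hp => ?_, tendsto_invFunOn_nhdsGT_zero (hanti.mono Ioo_subset_Ioc_self) hpos hsurj⟩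
  obtain ⟨hmem, hval⟩ := Function.invFunOn_pos (hsurj hp)
  exact ⟨hmem, hval, fun B' hB' hB'p => hanti.injOn (Ioo_subset_Ioc_self hB')
    (Ioo_subset_Ioc_self hmem) (hB'p.trans hval.symm)⟩
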